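/- Let σ > 0, θ(r) = (σ²/2 + √(σ⁴/4 + 2σ² r))/σ², K > 0, γ > 1, and let F, G be probability distributions on (0,∞) with h_F(t) ≥ h_G(t) for all t ≥ 0. Define x_F*(q) = (∫θ(r)dF(r) / ∫((θ(r)-1)/r)dF(r)) · (γ/(γ-1)) q^{1/γ} K and similarly x_G*(q). Then x_F*(q) ≤ x_G*(q) for every q > 0, assuming all the integrals are finite and positive. -/

import Mathlib

open Real MeasureTheory Set

/-- The positive root `θ(r)` of `(1/2)σ²θ² - (1/2)σ²θ - r = 0`. -/
noncomputable def θfun (σ r : ℝ) : ℝ :=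
  (σ^2 / 2 + Real.sqrt (σ^4 / 4 + 2 * σ^2 * r)) / σ^2

/-- The discount function induced by the weighting distribution `F`. -/
noncomputable def discount (F : Measure ℝ) (t : ℝ) : ℝ := ∫ r, Real.exp (-r * t) ∂F

/-- The investment triggering boundary for weighting distribution `F`. -/
noncomputable def trigger (σ K γ : ℝ) (F : Measure ℝ) (q : ℝ) : ℝ :=
  ((∫ r, θfun σ r ∂F) / (∫ r, (θfun σ r - 1) / r ∂F)) * (γ / (γ - 1)) * q ^ (1/γ) * K

/-!
Write `a = σ²/8`. Then `θ(r) - 1 = (√2/σ)(√(a + r) - √a)`, and `r ↦ √(a + r) - √a` is a Bernstein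
function: `√(a + r) - √a = ∫₀^∞ (1 - e^{-rt}) ν_a(dt)` with Lévy density
`ν_a(dt) = t^{-3/2} e^{-at} dt / (2√π)`: write `t^{-3/2}(e^{-at} - e^{-(a+r)t})` as
`∫ₐ^{a+r} t^{-1/2} e^{-st} ds`, swap the integrals and use `∫₀^∞ t^{-1/2} e^{-st} dt = √(π/s)`.

For any such `φ(r) = ∫ (1 - e^{-rt}) ν(dt)`, Tonelli gives `∫ φ dF = ∫ (1 - h_F(t)) ν(dt)`, which
decreases as the discount function `h_F = discount F` increases; and since
`(1 - e^{-rt})/r = ∫₀^t e^{-ru} du`, also `∫ φ(r)/r dF = ∫ ∫₀^t h_F(u) du ν(dt)`, which increases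
with `h_F`. Hence `h_F ≥ h_G` makes the numerator `∫ θ dF` of the trigger smaller and its
denominator `∫ (θ - 1)/r dF` larger than for `G`.
-/

open scoped ENNReal

lemma integral_exp_neg_mul {c : ℝ} (hc : c ≠ 0) (a b : ℝ) :
    ∫ x in a..b, exp (-c * x) = (exp (-c * a) - exp (-c * b)) / c := by
  rw [intervalIntegral.integral_comp_mul_left exp (neg_ne_zero.2 hc), integral_exp, smul_eq_mul]
  field_simp
  ring

section Laplace

variable {F : Measure ℝ}

lemma integrable_exp_neg_mul [IsFiniteMeasure F] (hF : ∀ᵐ r ∂F, 0 ≤ r) {t : ℝ} (ht : 0 ≤ t) :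
    Integrable (fun r => exp (-r * t)) F :=
  .of_bound (by fun_prop) 1 <| hF.mono fun r hr => by
    rw [norm_of_nonneg (exp_pos _).le, exp_le_one_iff]
    nlinarith

lemma lintegral_ofReal_exp_neg_mul [IsFiniteMeasure F] (hF : ∀ᵐ r ∂F, 0 ≤ r) {t : ℝ}
    (ht : 0 ≤ t) : ∫⁻ r, ENNReal.ofReal (exp (-r * t)) ∂F = ENNReal.ofReal (discount F t) :=
  (ofReal_integral_eq_lintegral_ofReal (integrable_exp_neg_mul hF ht)
    (ae_of_all _ fun _ => (exp_pos _).le)).symm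

lemma lintegral_ofReal_one_sub_exp_neg_mul [IsProbabilityMeasure F] (hF : ∀ᵐ r ∂F, 0 ≤ r)
    {t : ℝ} (ht : 0 ≤ t) :
    ∫⁻ r, ENNReal.ofReal (1 - exp (-r * t)) ∂F = ENNReal.ofReal (1 - discount F t) := by
  have hexp := integrable_exp_neg_mul hF ht
  have hnonneg : ∀ᵐ r ∂F, 0 ≤ 1 - exp (-r * t) := hF.mono fun r hr =>
    sub_nonneg.2 (exp_le_one_iff.2 (by nlinarith))
  have hint : Integrable (fun r => 1 - exp (-r * t)) F := (integrable_const 1).sub hexp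
  rw [← ofReal_integral_eq_lintegral_ofReal hint hnonneg,
    integral_sub (integrable_const 1) hexp, integral_const, probReal_univ, one_smul, discount]

lemma lintegral_Ioc_ofReal_exp_neg_mul {r : ℝ} (hr : 0 < r) {t : ℝ} (ht : 0 ≤ t) :
    ∫⁻ u in Ioc 0 t, ENNReal.ofReal (exp (-r * u))
      = ENNReal.ofReal r⁻¹ * ENNReal.ofReal (1 - exp (-r * t)) := by
  rw [← ofReal_integral_eq_lintegral_ofReal (Continuous.integrableOn_Ioc (by fun_prop))
    (ae_of_all _ fun _ => (exp_pos _).le), ← intervalIntegral.integral_of_le ht,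
    integral_exp_neg_mul hr.ne', ← ENNReal.ofReal_mul (inv_nonneg.2 hr.le)]
  congr 1
  simp only [mul_zero, exp_zero]
  field_simp

lemma lintegral_inv_mul_one_sub_exp_neg_mul [IsFiniteMeasure F] (hF : ∀ᵐ r ∂F, 0 < r)
    {t : ℝ} (ht : 0 ≤ t) :
    ∫⁻ r, ENNReal.ofReal r⁻¹ * ENNReal.ofReal (1 - exp (-r * t)) ∂F
      = ∫⁻ u in Ioc 0 t, ENNReal.ofReal (discount F u) := by
  calc ∫⁻ r, ENNReal.ofReal r⁻¹ * ENNReal.ofReal (1 - exp (-r * t)) ∂F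
      = ∫⁻ r, (∫⁻ u in Ioc 0 t, ENNReal.ofReal (exp (-r * u))) ∂F :=
        lintegral_congr_ae <| hF.mono fun r hr => (lintegral_Ioc_ofReal_exp_neg_mul hr ht).symm
    _ = ∫⁻ u in Ioc 0 t, ∫⁻ r, ENNReal.ofReal (exp (-r * u)) ∂F :=
        lintegral_lintegral_swap (by fun_prop)
    _ = ∫⁻ u in Ioc 0 t, ENNReal.ofReal (discount F u) :=
        setLIntegral_congr_fun measurableSet_Ioc fun u hu =>
          lintegral_ofReal_exp_neg_mul (hF.mono fun _ hr => hr.le) hu.1.le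

end Laplace

section Bernstein

variable (ν : Measure ℝ) [SFinite ν] {F G : Measure ℝ}

noncomputable def bernsteinFn (r : ℝ) : ℝ≥0∞ :=
  ∫⁻ t in Ioi 0, ENNReal.ofReal (1 - exp (-r * t)) ∂ν

theorem lintegral_bernsteinFn [IsProbabilityMeasure F] (hF : ∀ᵐ r ∂F, 0 ≤ r) :
    ∫⁻ r, bernsteinFn ν r ∂F = ∫⁻ t in Ioi 0, ENNReal.ofReal (1 - discount F t) ∂ν := by
  unfold bernsteinFn
  rw [lintegral_lintegral_swap (by fun_prop)]
  exact setLIntegral_congr_fun measurableSet_Ioi fun t ht =>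
    lintegral_ofReal_one_sub_exp_neg_mul hF (mem_Ioi.1 ht).le

theorem lintegral_inv_mul_bernsteinFn [IsFiniteMeasure F] (hF : ∀ᵐ r ∂F, 0 < r) :
    ∫⁻ r, ENNReal.ofReal r⁻¹ * bernsteinFn ν r ∂F
      = ∫⁻ t in Ioi 0, (∫⁻ u in Ioc 0 t, ENNReal.ofReal (discount F u)) ∂ν := by
  simp_rw [bernsteinFn, ← lintegral_const_mul' _ _ ENNReal.ofReal_ne_top]
  rw [lintegral_lintegral_swap (by fun_prop)]
  exact setLIntegral_congr_fun measurableSet_Ioi fun t ht =>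
    lintegral_inv_mul_one_sub_exp_neg_mul hF (mem_Ioi.1 ht).le

variable [IsProbabilityMeasure F] [IsProbabilityMeasure G]

theorem lintegral_bernsteinFn_le_of_discount_le
    (hdom : ∀ t, 0 ≤ t → discount G t ≤ discount F t) (hF : ∀ᵐ r ∂F, 0 ≤ r)
    (hG : ∀ᵐ r ∂G, 0 ≤ r) :
    ∫⁻ r, bernsteinFn ν r ∂F ≤ ∫⁻ r, bernsteinFn ν r ∂G := by
  rw [lintegral_bernsteinFn ν hF, lintegral_bernsteinFn ν hG]
  exact setLIntegral_mono' measurableSet_Ioi fun t ht =>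
    ENNReal.ofReal_le_ofReal (sub_le_sub_left (hdom t (mem_Ioi.1 ht).le) 1)

theorem lintegral_inv_mul_bernsteinFn_le_of_discount_le
    (hdom : ∀ t, 0 ≤ t → discount G t ≤ discount F t) (hF : ∀ᵐ r ∂F, 0 < r)
    (hG : ∀ᵐ r ∂G, 0 < r) :
    ∫⁻ r, ENNReal.ofReal r⁻¹ * bernsteinFn ν r ∂G
      ≤ ∫⁻ r, ENNReal.ofReal r⁻¹ * bernsteinFn ν r ∂F := by
  rw [lintegral_inv_mul_bernsteinFn ν hF, lintegral_inv_mul_bernsteinFn ν hG]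
  exact setLIntegral_mono' measurableSet_Ioi fun t _ =>
    setLIntegral_mono' measurableSet_Ioc fun u hu => ENNReal.ofReal_le_ofReal (hdom u hu.1.le)

end Bernstein

lemma lintegral_Ioi_rpow_neg_half_mul_exp_neg_mul {s : ℝ} (hs : 0 < s) :
    ∫⁻ t in Ioi 0, ENNReal.ofReal (t ^ (-(1 / 2) : ℝ) * exp (-s * t))
      = ENNReal.ofReal (√π * s ^ (-(1 / 2) : ℝ)) := by
  have hgamma := integral_rpow_mul_exp_neg_mul_Ioi (a := 1 / 2) (by norm_num) hs
  simp only [← neg_mul, show (1 / 2 : ℝ) - 1 = -(1 / 2) by norm_num] at hgamma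
  have hint : IntegrableOn (fun t => t ^ (-(1 / 2) : ℝ) * exp (-s * t)) (Ioi 0) := by
    simpa using integrableOn_rpow_mul_exp_neg_mul_rpow (p := 1) (s := -(1 / 2)) (by norm_num)
      one_pos hs
  have hnonneg : ∀ᵐ t ∂volume.restrict (Ioi 0), 0 ≤ t ^ (-(1 / 2) : ℝ) * exp (-s * t) :=
    (ae_restrict_mem measurableSet_Ioi).mono fun t ht => by
      have : 0 < t := ht
      positivity
  rw [← ofReal_integral_eq_lintegral_ofReal hint hnonneg, hgamma, Gamma_one_half_eq, one_div,
    inv_rpow hs.le, ← rpow_neg hs.le, mul_comm]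

lemma ofReal_rpow_mul_exp_mul_one_sub_exp_eq_lintegral {a r t : ℝ} (hr : 0 ≤ r) (ht : 0 < t) :
    ENNReal.ofReal (t ^ (-(3 / 2) : ℝ) * exp (-a * t) * (1 - exp (-r * t)))
      = ∫⁻ s in Ioc a (a + r), ENNReal.ofReal (t ^ (-(1 / 2) : ℝ) * exp (-s * t)) := by
  rw [← ofReal_integral_eq_lintegral_ofReal (Continuous.integrableOn_Ioc (by fun_prop))
    (ae_of_all _ fun _ => by positivity), ← intervalIntegral.integral_of_le (by linarith),
    intervalIntegral.integral_const_mul]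
  simp_rw [show ∀ s, -s * t = -t * s from fun s => by ring]
  rw [integral_exp_neg_mul ht.ne', show (-(3 / 2) : ℝ) = -(1 / 2) - 1 by norm_num,
    rpow_sub_one ht.ne', mul_add, exp_add]
  congr 1
  field_simp

theorem lintegral_rpow_mul_exp_mul_one_sub_exp {a r : ℝ} (ha : 0 < a) (hr : 0 ≤ r) :
    ∫⁻ t in Ioi 0, ENNReal.ofReal (t ^ (-(3 / 2) : ℝ) * exp (-a * t) * (1 - exp (-r * t)))
      = ENNReal.ofReal (2 * √π * (√(a + r) - √a)) := by
  have hpos : ∀ s ∈ Icc a (a + r), 0 < s := fun s hs => ha.trans_le hs.1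
  calc _ = ∫⁻ t in Ioi 0, ∫⁻ s in Ioc a (a + r),
          ENNReal.ofReal (t ^ (-(1 / 2) : ℝ) * exp (-s * t)) :=
        setLIntegral_congr_fun measurableSet_Ioi fun t ht =>
          ofReal_rpow_mul_exp_mul_one_sub_exp_eq_lintegral hr ht
    _ = ∫⁻ s in Ioc a (a + r), ENNReal.ofReal (√π * s ^ (-(1 / 2) : ℝ)) := by
        rw [lintegral_lintegral_swap (by fun_prop)]
        exact setLIntegral_congr_fun measurableSet_Ioc fun s hs =>
          lintegral_Ioi_rpow_neg_half_mul_exp_neg_mul (hpos s (Ioc_subset_Icc_self hs))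
    _ = _ := by
        have hint : IntegrableOn (fun s => √π * s ^ (-(1 / 2) : ℝ)) (Icc a (a + r)) :=
          ContinuousOn.integrableOn_Icc (continuousOn_const.mul
            (continuousOn_id.rpow_const fun s hs => .inl (hpos s hs).ne'))
        rw [← ofReal_integral_eq_lintegral_ofReal (hint.mono_set Ioc_subset_Icc_self)
          ((ae_restrict_mem measurableSet_Ioc).mono fun s hs => by
            have := hpos s (Ioc_subset_Icc_self hs)
            positivity),
          ← intervalIntegral.integral_of_le (by linarith), intervalIntegral.integral_const_mul,
          integral_rpow (.inl (by norm_num))]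
        simp only [sqrt_eq_rpow]
        norm_num
        congr 1
        ring

noncomputable def sqrtLevyMeasure (a : ℝ) : Measure ℝ :=
  volume.withDensity fun t => ENNReal.ofReal (t ^ (-(3 / 2) : ℝ) * exp (-a * t) / (2 * √π))

instance (a : ℝ) : SFinite (sqrtLevyMeasure a) := by
  unfold sqrtLevyMeasure
  infer_instance

theorem bernsteinFn_sqrtLevyMeasure {a r : ℝ} (ha : 0 < a) (hr : 0 ≤ r) :
    bernsteinFn (sqrtLevyMeasure a) r = ENNReal.ofReal (√(a + r) - √a) := by
  have hc : 0 < 2 * √π := by positivity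
  rw [bernsteinFn, sqrtLevyMeasure, setLIntegral_withDensity_eq_setLIntegral_mul _ (by fun_prop)
    (by fun_prop) measurableSet_Ioi]
  calc _ = ∫⁻ t in Ioi 0, ENNReal.ofReal (2 * √π)⁻¹
          * ENNReal.ofReal (t ^ (-(3 / 2) : ℝ) * exp (-a * t) * (1 - exp (-r * t))) :=
        setLIntegral_congr_fun measurableSet_Ioi fun t ht => by
          have : 0 < t := ht
          rw [Pi.mul_apply, ← ENNReal.ofReal_mul (by positivity),
            ← ENNReal.ofReal_mul (by positivity)]
          congr 1
          ring
    _ = _ := by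
        rw [lintegral_const_mul' _ _ ENNReal.ofReal_ne_top,
          lintegral_rpow_mul_exp_mul_one_sub_exp ha hr, ← ENNReal.ofReal_mul (by positivity),
          inv_mul_cancel_left₀ hc.ne']

lemma integral_le_integral_of_lintegral_ofReal_le {α : Type*} [MeasurableSpace α]
    {μ ν : Measure α} {f g : α → ℝ} (hf : 0 ≤ᵐ[μ] f) (hfm : AEStronglyMeasurable f μ)
    (hg : 0 ≤ᵐ[ν] g) (hgi : Integrable g ν)
    (h : ∫⁻ x, ENNReal.ofReal (f x) ∂μ ≤ ∫⁻ x, ENNReal.ofReal (g x) ∂ν) :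
    ∫ x, f x ∂μ ≤ ∫ x, g x ∂ν := by
  rw [integral_eq_lintegral_of_nonneg_ae hf hfm, integral_eq_lintegral_of_nonneg_ae hg hgi.1]
  exact ENNReal.toReal_mono hgi.lintegral_lt_top.ne h

section SqrtComparison

variable {a : ℝ} {F G : Measure ℝ} [IsProbabilityMeasure F] [IsProbabilityMeasure G]

theorem integral_sqrt_add_sub_sqrt_le_of_discount_le (ha : 0 < a)
    (hdom : ∀ t, 0 ≤ t → discount G t ≤ discount F t) (hF : ∀ᵐ r ∂F, 0 ≤ r)
    (hG : ∀ᵐ r ∂G, 0 ≤ r) (hint : Integrable (fun r => √(a + r) - √a) G) :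
    ∫ r, (√(a + r) - √a) ∂F ≤ ∫ r, (√(a + r) - √a) ∂G := by
  have hnonneg (r : ℝ) (hr : 0 ≤ r) : 0 ≤ √(a + r) - √a :=
    sub_nonneg.2 (sqrt_le_sqrt (by linarith))
  refine integral_le_integral_of_lintegral_ofReal_le (hF.mono hnonneg) (by fun_prop)
    (hG.mono hnonneg) hint ?_
  calc _ = ∫⁻ r, bernsteinFn (sqrtLevyMeasure a) r ∂F :=
        lintegral_congr_ae (hF.mono fun r hr => (bernsteinFn_sqrtLevyMeasure ha hr).symm)
    _ ≤ ∫⁻ r, bernsteinFn (sqrtLevyMeasure a) r ∂G :=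
        lintegral_bernsteinFn_le_of_discount_le _ hdom hF hG
    _ = _ := lintegral_congr_ae (hG.mono fun r hr => bernsteinFn_sqrtLevyMeasure ha hr)

theorem integral_sqrt_add_sub_sqrt_div_le_of_discount_le (ha : 0 < a)
    (hdom : ∀ t, 0 ≤ t → discount G t ≤ discount F t) (hF : ∀ᵐ r ∂F, 0 < r)
    (hG : ∀ᵐ r ∂G, 0 < r) (hint : Integrable (fun r => (√(a + r) - √a) / r) F) :
    ∫ r, (√(a + r) - √a) / r ∂G ≤ ∫ r, (√(a + r) - √a) / r ∂F := by
  have hrepr (r : ℝ) (hr : 0 < r) :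
      ENNReal.ofReal ((√(a + r) - √a) / r)
        = ENNReal.ofReal r⁻¹ * bernsteinFn (sqrtLevyMeasure a) r := by
    rw [bernsteinFn_sqrtLevyMeasure ha hr.le, ← ENNReal.ofReal_mul (inv_nonneg.2 hr.le),
      div_eq_inv_mul]
  have hnonneg (r : ℝ) (hr : 0 < r) : 0 ≤ (√(a + r) - √a) / r :=
    div_nonneg (sub_nonneg.2 (sqrt_le_sqrt (by linarith))) hr.le
  have hmeas : Measurable fun r => (√(a + r) - √a) / r := by fun_prop
  refine integral_le_integral_of_lintegral_ofReal_le (hG.mono hnonneg) hmeas.aestronglyMeasurable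
    (hF.mono hnonneg) hint ?_
  calc _ = ∫⁻ r, ENNReal.ofReal r⁻¹ * bernsteinFn (sqrtLevyMeasure a) r ∂G :=
        lintegral_congr_ae (hG.mono hrepr)
    _ ≤ ∫⁻ r, ENNReal.ofReal r⁻¹ * bernsteinFn (sqrtLevyMeasure a) r ∂F :=
        lintegral_inv_mul_bernsteinFn_le_of_discount_le _ hdom hF hG
    _ = _ := (lintegral_congr_ae (hF.mono hrepr)).symm

end SqrtComparison

section Theta

variable {σ : ℝ} {F : Measure ℝ}

lemma θfun_sub_one_eq (hσ : 0 < σ) (r : ℝ) :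
    θfun σ r - 1 = √2 / σ * (√(σ ^ 2 / 8 + r) - √(σ ^ 2 / 8)) := by
  have hroot : √(σ ^ 4 / 4 + 2 * σ ^ 2 * r) = σ * √2 * √(σ ^ 2 / 8 + r) := by
    rw [show σ ^ 4 / 4 + 2 * σ ^ 2 * r = σ ^ 2 * 2 * (σ ^ 2 / 8 + r) by ring,
      sqrt_mul (by positivity), sqrt_mul (sq_nonneg σ), sqrt_sq hσ.le]
  have hhalf : √2 * √(σ ^ 2 / 8) = σ / 2 := by
    rw [← sqrt_mul zero_le_two, show 2 * (σ ^ 2 / 8) = (σ / 2) ^ 2 by ring,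
      sqrt_sq (by positivity)]
  rw [θfun, hroot, mul_sub, div_mul_eq_mul_div _ _ (√(σ ^ 2 / 8)), hhalf]
  field_simp
  ring

lemma integral_θfun [IsProbabilityMeasure F] (hσ : 0 < σ) (h : Integrable (θfun σ) F) :
    ∫ r, θfun σ r ∂F = 1 + √2 / σ * ∫ r, (√(σ ^ 2 / 8 + r) - √(σ ^ 2 / 8)) ∂F := by
  rw [← integral_const_mul, ← sub_eq_iff_eq_add']
  simp_rw [← θfun_sub_one_eq hσ]
  rw [integral_sub h (integrable_const 1), integral_const, probReal_univ, one_smul]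

lemma integrable_sqrt_add_sub_sqrt_of_integrable_θfun [IsFiniteMeasure F] (hσ : 0 < σ)
    (h : Integrable (θfun σ) F) :
    Integrable (fun r => √(σ ^ 2 / 8 + r) - √(σ ^ 2 / 8)) F := by
  refine ((h.sub (integrable_const 1)).const_mul (σ / √2)).congr (ae_of_all _ fun r => ?_)
  simp only [Pi.sub_apply, θfun_sub_one_eq hσ]
  field_simp

lemma integral_θfun_sub_one_div (hσ : 0 < σ) :
    ∫ r, (θfun σ r - 1) / r ∂F = √2 / σ * ∫ r, (√(σ ^ 2 / 8 + r) - √(σ ^ 2 / 8)) / r ∂F := by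
  rw [← integral_const_mul]
  simp_rw [θfun_sub_one_eq hσ, mul_div_assoc]

lemma integrable_sqrt_add_sub_sqrt_div_of_integrable_θfun_sub_one_div (hσ : 0 < σ)
    (h : Integrable (fun r => (θfun σ r - 1) / r) F) :
    Integrable (fun r => (√(σ ^ 2 / 8 + r) - √(σ ^ 2 / 8)) / r) F := by
  refine (h.const_mul (σ / √2)).congr (ae_of_all _ fun r => ?_)
  simp only [θfun_sub_one_eq hσ]
  field_simp

end Theta

theorem stmt13_general (σ K γ : ℝ) (hσ : 0 < σ) (hK : 0 < K) (hγ : 1 < γ)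
    (F G : Measure ℝ) [IsProbabilityMeasure F] [IsProbabilityMeasure G]
    (hFc : F (Ioi (0:ℝ))ᶜ = 0) (hGc : G (Ioi (0:ℝ))ᶜ = 0)
    (hdom : ∀ t : ℝ, 0 ≤ t → discount F t ≥ discount G t)
    (hIntF1 : Integrable (θfun σ) F) (hIntG1 : Integrable (θfun σ) G)
    (hIntF2 : Integrable (fun r => (θfun σ r - 1) / r) F)
    (hposG1 : 0 < ∫ r, θfun σ r ∂G)
    (hposG2 : 0 < ∫ r, (θfun σ r - 1) / r ∂G) :
    ∀ q : ℝ, 0 < q → trigger σ K γ F q ≤ trigger σ K γ G q := by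
  intro q hq
  have hF : ∀ᵐ r ∂F, 0 < r := mem_ae_iff.2 hFc
  have hG : ∀ᵐ r ∂G, 0 < r := mem_ae_iff.2 hGc
  have ha : 0 < σ ^ 2 / 8 := by positivity
  have hnum : ∫ r, θfun σ r ∂F ≤ ∫ r, θfun σ r ∂G := by
    rw [integral_θfun hσ hIntF1, integral_θfun hσ hIntG1]
    gcongr 1 + _ * ?_
    exact integral_sqrt_add_sub_sqrt_le_of_discount_le ha hdom (hF.mono fun _ => le_of_lt)
      (hG.mono fun _ => le_of_lt) (integrable_sqrt_add_sub_sqrt_of_integrable_θfun hσ hIntG1)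
  have hden : ∫ r, (θfun σ r - 1) / r ∂G ≤ ∫ r, (θfun σ r - 1) / r ∂F := by
    rw [integral_θfun_sub_one_div hσ, integral_θfun_sub_one_div hσ]
    gcongr _ * ?_
    exact integral_sqrt_add_sub_sqrt_div_le_of_discount_le ha hdom hF hG
      (integrable_sqrt_add_sub_sqrt_div_of_integrable_θfun_sub_one_div hσ hIntF2)
  have hratio : 0 ≤ γ / (γ - 1) := div_nonneg (by linarith) (by linarith)
  unfold trigger
  gcongr ?_ * _ * _ * _
  exact div_le_div₀ hposG1.le hnum hposG2 hden

theorem stmt13 (σ K γ : ℝ) (hσ : 0 < σ) (hK : 0 < K) (hγ : 1 < γ)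
    (F G : Measure ℝ) [IsProbabilityMeasure F] [IsProbabilityMeasure G]
    (hFc : F (Ioi (0:ℝ))ᶜ = 0) (hGc : G (Ioi (0:ℝ))ᶜ = 0)
    (hdom : ∀ t : ℝ, 0 ≤ t → discount F t ≥ discount G t)
    (hIntF1 : Integrable (θfun σ) F) (hIntG1 : Integrable (θfun σ) G)
    (hIntF2 : Integrable (fun r => (θfun σ r - 1) / r) F)
    (hIntG2 : Integrable (fun r => (θfun σ r - 1) / r) G)
    (hposF1 : 0 < ∫ r, θfun σ r ∂F) (hposG1 : 0 < ∫ r, θfun σ r ∂G)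
    (hposF2 : 0 < ∫ r, (θfun σ r - 1) / r ∂F)
    (hposG2 : 0 < ∫ r, (θfun σ r - 1) / r ∂G) :
    ∀ q : ℝ, 0 < q → trigger σ K γ F q ≤ trigger σ K γ G q :=
  stmt13_general σ K γ hσ hK hγ F G hFc hGc hdom hIntF1 hIntG1 hIntF2 hposG1 hposG2
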